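/- For every integer r ≥ 1 there exists a constant C > 0 such that the following holds: for every prime power q, all positive integers k1 ≤ q − 1, z ≥ 1, and d ≥ 1 with r·d·(k1 − 1) < q − 1 − z, and every positive integer n ≤ q^{k1}, there exists a t × n binary (d, r; z]-disjunct matrix with t ≤ C·q^{r+1}. -/

import Mathlib

/-- An `m × n` binary matrix `M` is `(d, r; z]`-disjunct if for every pair of disjoint
sets `S1`, `S2` of column indices with `|S1| = d` and `|S2| = r`, there are at least `z`
rows in which every column indexed by `S2` has entry 1 and every column indexed by `S1`
has entry 0. -/
def Disjunct (m n d r z : ℕ) (M : Fin m → Fin n → Bool) : Prop :=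
  ∀ S1 S2 : Finset (Fin n), Disjoint S1 S2 → S1.card = d → S2.card = r →
    z ≤ (Finset.univ.filter fun i : Fin m =>
      (∀ j ∈ S2, M i j = true) ∧ ∀ j ∈ S1, M i j = false).card

/-!
The columns are Reed–Solomon codewords, i.e. polynomials of degree `< k1` over `𝔽_q`; the rows
are the pairs `(x, y) ∈ 𝔽_q × 𝔽_q^r`, and column `f` has a `1` in row `(x, y)` iff `f x` is
one of the `y l`. Given `S1` and `S2`, every point `x` at which no codeword of `S1` agrees with
one of `S2` yields the good row `(x, (g x)_{g ∈ S2})`. Two distinct polynomials of degree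
`< k1` agree at most `k1 - 1` times, so at most `d·r·(k1 - 1)` points are lost, leaving at
least `z` good rows among the `q^(r+1)` rows.
-/

open Finset Polynomial

section CodeMatrix

variable {ι A B : Type*} [Fintype A] [DecidableEq B]

def codeMatrix (r : ℕ) (c : ι → A → B) (ρ : A × (Fin r → B)) (j : ι) : Bool :=
  decide (∃ l, ρ.2 l = c j ρ.1)

lemma card_filter_exists_agree_le (c : ι → A → B) {s : ℕ}
    (hc : ∀ j j', j ≠ j' → #{a | c j a = c j' a} ≤ s) {S1 S2 : Finset ι}
    (hdisj : Disjoint S1 S2) :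
    #{a | ∃ j ∈ S1, ∃ j' ∈ S2, c j a = c j' a} ≤ #S1 * #S2 * s := by
  classical
  calc #{a | ∃ j ∈ S1, ∃ j' ∈ S2, c j a = c j' a}
      ≤ #(S1.biUnion fun j => S2.biUnion fun j' => {a | c j a = c j' a}) :=
        card_le_card fun a ha => by simpa using ha
    _ ≤ #S1 * (#S2 * s) :=
        card_biUnion_le_card_mul _ _ _ fun j hj => card_biUnion_le_card_mul _ _ _
          fun j' hj' => hc j j' (disjoint_left.mp hdisj hj <| · ▸ hj')
    _ = #S1 * #S2 * s := (mul_assoc ..).symm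

lemma card_sub_le_card_filter_codeMatrix [Fintype B] (c : ι → A → B) {s : ℕ}
    (hc : ∀ j j', j ≠ j' → #{a | c j a = c j' a} ≤ s) {S1 S2 : Finset ι}
    (hdisj : Disjoint S1 S2) {r : ℕ} (hS2 : #S2 = r) :
    Fintype.card A - #S1 * r * s ≤ #{ρ : A × (Fin r → B) |
      (∀ j ∈ S2, codeMatrix r c ρ j = true) ∧ ∀ j ∈ S1, codeMatrix r c ρ j = false} := by
  classical
  set Agree : A → Prop := fun a => ∃ j ∈ S1, ∃ j' ∈ S2, c j a = c j' a
  have hfree : Fintype.card A - #S1 * r * s ≤ #{a | ¬Agree a} :=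
    calc Fintype.card A - #S1 * r * s ≤ Fintype.card A - #{a | Agree a} :=
          tsub_le_tsub_left (hS2 ▸ card_filter_exists_agree_le c hc hdisj) _
      _ = #{a | ¬Agree a} := by
          rw [← card_univ, ← card_filter_add_card_filter_not (s := univ) Agree,
            Nat.add_sub_cancel_left]
  let g : Fin r ≃ S2 := (S2.equivFinOfCardEq hS2).symm
  refine hfree.trans (card_le_card_of_injOn (fun a => (a, fun l => c (g l) a)) (fun a ha => ?_)
    fun a _ b _ h => congrArg Prod.fst h)
  simp only [coe_filter, mem_univ, true_and, Set.mem_ofPred_eq, codeMatrix, decide_eq_true_eq,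
    decide_eq_false_iff_not, not_exists] at ha ⊢
  refine ⟨fun j hj => ⟨g.symm ⟨j, hj⟩, by simp⟩, fun j hj l hl => ?_⟩
  exact ha ⟨j, hj, g l, (g l).2, hl.symm⟩

theorem disjunct_codeMatrix [Fintype B] {n t d r z s : ℕ} (c : Fin n → A → B)
    (hc : ∀ j j', j ≠ j' → #{a | c j a = c j' a} ≤ s) (hz : r * d * s + z ≤ Fintype.card A)
    (e : Fin t ≃ A × (Fin r → B)) :
    Disjunct t n d r z fun i => codeMatrix r c (e i) := by
  intro S1 S2 hdisj hS1 hS2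
  have hrows := card_sub_le_card_filter_codeMatrix c hc hdisj hS2
  rw [hS1, Nat.mul_comm d r] at hrows
  calc z ≤ Fintype.card A - r * d * s := by omega
    _ ≤ _ := hrows
    _ = _ := (card_equiv e fun i => by simp).symm

end CodeMatrix

section ReedSolomon

variable {R : Type*} [CommRing R] [IsDomain R] [Fintype R] [DecidableEq R]

lemma card_eval_eq_le_of_mem_degreeLT {k : ℕ} {p p' : R[X]} (hp : p ∈ R[X]_k)
    (hp' : p' ∈ R[X]_k) (hne : p ≠ p') : #{x | p.eval x = p'.eval x} ≤ k - 1 := by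
  have hsub : p - p' ≠ 0 := sub_ne_zero.mpr hne
  have hdeg : (p - p').natDegree < k :=
    (natDegree_lt_iff_degree_lt hsub).mpr (mem_degreeLT.mp (Submodule.sub_mem _ hp hp'))
  calc #{x | p.eval x = p'.eval x} ≤ (p - p').natDegree :=
        card_le_degree_of_subset_roots fun x hx => by simpa [mem_roots hsub, sub_eq_zero] using hx
    _ ≤ k - 1 := by omega

theorem exists_disjunct_reedSolomon {n k d r z : ℕ} (hn : n ≤ Fintype.card R ^ k)
    (hz : r * d * (k - 1) + z ≤ Fintype.card R) :
    ∃ M : Fin (Fintype.card R ^ (r + 1)) → Fin n → Bool, Disjunct _ n d r z M := by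
  obtain ⟨ι⟩ : Nonempty (Fin n ↪ (Fin k → R)) :=
    Function.Embedding.nonempty_of_card_le (by simpa using hn)
  let f : Fin n ↪ R[X]_k := ι.trans (degreeLTEquiv R k).symm.toEquiv.toEmbedding
  exact ⟨_, disjunct_codeMatrix (fun j x => (f j : R[X]).eval x)
    (fun j j' h => card_eval_eq_le_of_mem_degreeLT (f j).2 (f j').2
      (Subtype.coe_injective.ne (f.injective.ne h))) hz
    (Fintype.equivFinOfCardEq (by simp [pow_succ, mul_comm])).symm⟩

end ReedSolomon

theorem rs_disjunct_exists_general (r : ℕ) :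
    ∃ C : ℝ, 0 < C ∧ ∀ q k1 z d n : ℕ, IsPrimePow q →
      0 < k1 → k1 ≤ q - 1 → 0 < z → 0 < d →
      r * d * (k1 - 1) < q - 1 - z →
      0 < n → n ≤ q ^ k1 →
      ∃ t : ℕ, ∃ M : Fin t → Fin n → Bool, Disjunct t n d r z M ∧
        (t : ℝ) ≤ C * (q : ℝ) ^ (r + 1) := by
  refine ⟨1, one_pos, fun q k1 z d n hq _ _ _ _ hlt _ hn => ?_⟩
  -- any field structure on `Fin q` will do: only its cardinality is visible in the conclusion
  obtain ⟨_⟩ : Nonempty (Field (Fin q)) := Fintype.nonempty_field_iff.mpr (by simpa using hq)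
  obtain ⟨M, hM⟩ := exists_disjunct_reedSolomon (R := Fin q) (d := d) (r := r) (z := z)
    (by simpa using hn) (by rw [Fintype.card_fin]; omega)
  exact ⟨_, M, hM, by simp⟩

/-- for every `r ≥ 1` there is a constant `C > 0` such that for every
prime power `q`, positive integers `k1 ≤ q − 1`, `z`, `d` with
`r·d·(k1 − 1) < q − 1 − z`, and every positive integer `n ≤ q^{k1}`, there exists a
`t × n` binary `(d, r; z]`-disjunct matrix with `t ≤ C·q^{r+1}`. -/
theorem rs_disjunct_exists (r : ℕ) (hr : 1 ≤ r) :
    ∃ C : ℝ, 0 < C ∧ ∀ q k1 z d n : ℕ, IsPrimePow q →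
      0 < k1 → k1 ≤ q - 1 → 0 < z → 0 < d →
      r * d * (k1 - 1) < q - 1 - z →
      0 < n → n ≤ q ^ k1 →
      ∃ t : ℕ, ∃ M : Fin t → Fin n → Bool, Disjunct t n d r z M ∧
        (t : ℝ) ≤ C * (q : ℝ) ^ (r + 1) :=
  rs_disjunct_exists_general r
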